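/- Let F₃(x,t) = x¹² + (6t² + 98/3)x¹⁰ + (15t⁴ + 230t² + 245/3)x⁸ + (20t⁶ + (1540/3)t⁴ + (18620/9)t² + 75460/81)x⁶ + (15t⁸ + (1460/3)t⁶ + (37450/9)t⁴ + (24500/3)t² − 5187875/243)x⁴ + (6t¹⁰ + 190t⁸ + (35420/9)t⁶ − (4900/9)t⁴ + (188650/27)t² + 159786550/729)x² + t¹² + (58/3)t¹⁰ + (1445/3)t⁸ + (798980/81)t⁶ + (16391725/243)t⁴ + (300896750/729)t² + 878826025/6561, let P₂(x,t) = 5x⁶ − (5t² − 35)x⁴ − (9t⁴ + (190/3)t² + 665/9)x² + t⁶ − (7/3)t⁴ − (245/9)t² + 18865/81, and let Q₂(x,t) = x⁶ − (9t² − 13/3)x⁴ − (5t⁴ + (230/3)t² + 245/9)x² + 5t⁶ + 15t⁴ + (535/9)t² + 12005/81. Then for all real parameters α and β, the polynomial F̃₃(x,t;α,β) = F₃(x,t) + 2αt·P₂(x,t) + 2βx·Q₂(x,t) + (α² + β²)(x² + t² + 1) satisfies, as a function of (x,t) ∈ ℝ², the bilinear Boussinesq equation F·F_tt − (F_t)²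 + F·F_xx − (F_x)² − (1/3)(F·F_xxxx − 4·F_x·F_xxx + 3·(F_xx)²) = 0. -/

import Mathlib

/-- Partial derivative in the first (space) variable. -/
noncomputable def dX (f : ℝ → ℝ → ℝ) : ℝ → ℝ → ℝ := fun x t => deriv (fun x' => f x' t) x

/-- Partial derivative in the second (time) variable. -/
noncomputable def dT (f : ℝ → ℝ → ℝ) : ℝ → ℝ → ℝ := fun x t => deriv (fun t' => f x t') t

/-- The bilinear Boussinesq equation
`F·F_tt − (F_t)² + F·F_xx − (F_x)² − (1/3)(F·F_xxxx − 4 F_x F_xxx + 3 (F_xx)²) = 0`. -/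
def IsBilinearBQSolution (F : ℝ → ℝ → ℝ) : Prop :=
  ∀ x t : ℝ,
    F x t * dT (dT F) x t - (dT F x t) ^ 2 + F x t * dX (dX F) x t - (dX F x t) ^ 2
      - (1 / 3) * (F x t * dX (dX (dX (dX F))) x t
          - 4 * dX F x t * dX (dX (dX F)) x t + 3 * (dX (dX F) x t) ^ 2) = 0

/-- The polynomial `F₃(x,t)`. -/
noncomputable def F3 (x t : ℝ) : ℝ :=
  x ^ 12 + (6 * t ^ 2 + 98 / 3) * x ^ 10 + (15 * t ^ 4 + 230 * t ^ 2 + 245 / 3) * x ^ 8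
    + (20 * t ^ 6 + (1540 / 3) * t ^ 4 + (18620 / 9) * t ^ 2 + 75460 / 81) * x ^ 6
    + (15 * t ^ 8 + (1460 / 3) * t ^ 6 + (37450 / 9) * t ^ 4 + (24500 / 3) * t ^ 2
        - 5187875 / 243) * x ^ 4
    + (6 * t ^ 10 + 190 * t ^ 8 + (35420 / 9) * t ^ 6 - (4900 / 9) * t ^ 4
        + (188650 / 27) * t ^ 2 + 159786550 / 729) * x ^ 2
    + t ^ 12 + (58 / 3) * t ^ 10 + (1445 / 3) * t ^ 8 + (798980 / 81) * t ^ 6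
    + (16391725 / 243) * t ^ 4 + (300896750 / 729) * t ^ 2 + 878826025 / 6561

/-- The polynomial `P₂(x,t)`. -/
noncomputable def P2 (x t : ℝ) : ℝ :=
  5 * x ^ 6 - (5 * t ^ 2 - 35) * x ^ 4 - (9 * t ^ 4 + (190 / 3) * t ^ 2 + 665 / 9) * x ^ 2
    + t ^ 6 - (7 / 3) * t ^ 4 - (245 / 9) * t ^ 2 + 18865 / 81

/-- The polynomial `Q₂(x,t)`. -/
noncomputable def Q2 (x t : ℝ) : ℝ :=
  x ^ 6 - (9 * t ^ 2 - 13 / 3) * x ^ 4 - (5 * t ^ 4 + (230 / 3) * t ^ 2 + 245 / 9) * x ^ 2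
    + 5 * t ^ 6 + 15 * t ^ 4 + (535 / 9) * t ^ 2 + 12005 / 81

/-!
The function `F̃₃` is a polynomial in `(x, t)`, and the partial derivatives of a polynomial
function are the values of its formal partial derivatives. The bilinear Boussinesq equation for
`F̃₃` is therefore the vanishing of one polynomial in `x`, `t`, `α`, `β`, which is checked by
expanding it.
-/

open MvPolynomial

theorem MvPolynomial.hasDerivAt_eval_update {σ 𝕜 : Type*} [DecidableEq σ]
    [NontriviallyNormedField 𝕜] (p : MvPolynomial σ 𝕜) (v : σ → 𝕜) (i : σ) (s : 𝕜) :
    HasDerivAt (fun s => eval (Function.update v i s) p)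
      (eval (Function.update v i s) (pderiv i p)) s := by
  induction p using MvPolynomial.induction_on with
  | C a => simpa using hasDerivAt_const s a
  | add p q hp hq => simpa using hp.fun_add hq
  | mul_X p j hp =>
    simp only [map_mul, eval_X, Derivation.leibniz, pderiv_X, smul_eq_mul, map_add]
    rcases eq_or_ne j i with rfl | hji
    · simpa [add_comm, mul_comm] using hp.fun_mul (hasDerivAt_id' s)
    · simpa [Function.update_of_ne hji, hji, mul_comm] using hp.mul_const (v j)

lemma dX_eval (p : MvPolynomial (Fin 2) ℝ) :
    dX (fun x t => eval ![x, t] p) = fun x t => eval ![x, t] (pderiv 0 p) := by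
  funext x t
  have hv (s : ℝ) : Function.update ![x, t] 0 s = ![s, t] := by ext i; fin_cases i <;> rfl
  simpa only [dX, hv] using (p.hasDerivAt_eval_update ![x, t] 0 x).deriv

lemma dT_eval (p : MvPolynomial (Fin 2) ℝ) :
    dT (fun x t => eval ![x, t] p) = fun x t => eval ![x, t] (pderiv 1 p) := by
  funext x t
  have hv (s : ℝ) : Function.update ![x, t] 1 s = ![x, s] := by ext i; fin_cases i <;> rfl
  simpa only [dT, hv] using (p.hasDerivAt_eval_update ![x, t] 1 t).deriv

noncomputable def bilinearBQ (p : MvPolynomial (Fin 2) ℝ) : MvPolynomial (Fin 2) ℝ :=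
  p * pderiv 1 (pderiv 1 p) - pderiv 1 p ^ 2 + p * pderiv 0 (pderiv 0 p) - pderiv 0 p ^ 2
    - C (1 / 3) * (p * pderiv 0 (pderiv 0 (pderiv 0 (pderiv 0 p)))
      - 4 * pderiv 0 p * pderiv 0 (pderiv 0 (pderiv 0 p)) + 3 * pderiv 0 (pderiv 0 p) ^ 2)

lemma isBilinearBQSolution_eval {p : MvPolynomial (Fin 2) ℝ} (hp : bilinearBQ p = 0) :
    IsBilinearBQSolution (fun x t => eval ![x, t] p) := by
  intro x t
  simpa [dX_eval, dT_eval, bilinearBQ] using congrArg (eval ![x, t]) hp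

lemma pderiv_zero_X_one {R : Type*} [CommSemiring R] :
    pderiv 0 (X 1 : MvPolynomial (Fin 2) R) = 0 :=
  pderiv_X_of_ne (by decide)

lemma pderiv_one_X_zero {R : Type*} [CommSemiring R] :
    pderiv 1 (X 0 : MvPolynomial (Fin 2) R) = 0 :=
  pderiv_X_of_ne (by decide)

local notation "𝕩" => (X 0 : MvPolynomial (Fin 2) ℝ)
local notation "𝕥" => (X 1 : MvPolynomial (Fin 2) ℝ)

noncomputable def F3poly : MvPolynomial (Fin 2) ℝ :=
  𝕩 ^ 12 + (C 6 * 𝕥 ^ 2 + C (98 / 3)) * 𝕩 ^ 10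
    + (C 15 * 𝕥 ^ 4 + C 230 * 𝕥 ^ 2 + C (245 / 3)) * 𝕩 ^ 8
    + (C 20 * 𝕥 ^ 6 + C (1540 / 3) * 𝕥 ^ 4 + C (18620 / 9) * 𝕥 ^ 2 + C (75460 / 81)) * 𝕩 ^ 6
    + (C 15 * 𝕥 ^ 8 + C (1460 / 3) * 𝕥 ^ 6 + C (37450 / 9) * 𝕥 ^ 4 + C (24500 / 3) * 𝕥 ^ 2
        - C (5187875 / 243)) * 𝕩 ^ 4
    + (C 6 * 𝕥 ^ 10 + C 190 * 𝕥 ^ 8 + C (35420 / 9) * 𝕥 ^ 6 - C (4900 / 9) * 𝕥 ^ 4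
        + C (188650 / 27) * 𝕥 ^ 2 + C (159786550 / 729)) * 𝕩 ^ 2
    + 𝕥 ^ 12 + C (58 / 3) * 𝕥 ^ 10 + C (1445 / 3) * 𝕥 ^ 8 + C (798980 / 81) * 𝕥 ^ 6
    + C (16391725 / 243) * 𝕥 ^ 4 + C (300896750 / 729) * 𝕥 ^ 2 + C (878826025 / 6561)

noncomputable def P2poly : MvPolynomial (Fin 2) ℝ :=
  C 5 * 𝕩 ^ 6 - (C 5 * 𝕥 ^ 2 - C 35) * 𝕩 ^ 4
    - (C 9 * 𝕥 ^ 4 + C (190 / 3) * 𝕥 ^ 2 + C (665 / 9)) * 𝕩 ^ 2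
    + 𝕥 ^ 6 - C (7 / 3) * 𝕥 ^ 4 - C (245 / 9) * 𝕥 ^ 2 + C (18865 / 81)

noncomputable def Q2poly : MvPolynomial (Fin 2) ℝ :=
  𝕩 ^ 6 - (C 9 * 𝕥 ^ 2 - C (13 / 3)) * 𝕩 ^ 4
    - (C 5 * 𝕥 ^ 4 + C (230 / 3) * 𝕥 ^ 2 + C (245 / 9)) * 𝕩 ^ 2
    + C 5 * 𝕥 ^ 6 + C 15 * 𝕥 ^ 4 + C (535 / 9) * 𝕥 ^ 2 + C (12005 / 81)

noncomputable def F3tildePoly (α β : ℝ) : MvPolynomial (Fin 2) ℝ :=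
  F3poly + C (2 * α) * 𝕥 * P2poly + C (2 * β) * 𝕩 * Q2poly
    + C (α ^ 2 + β ^ 2) * (𝕩 ^ 2 + 𝕥 ^ 2 + 1)

lemma eval_F3tildePoly (α β : ℝ) :
    (fun x t => eval ![x, t] (F3tildePoly α β))
      = fun x t => F3 x t + 2 * α * t * P2 x t + 2 * β * x * Q2 x t
        + (α ^ 2 + β ^ 2) * (x ^ 2 + t ^ 2 + 1) := by
  funext x t
  simp [F3tildePoly, F3poly, P2poly, Q2poly, F3, P2, Q2]

theorem bilinearBQ_F3tildePoly (α β : ℝ) : bilinearBQ (F3tildePoly α β) = 0 := by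
  -- `ring` cannot merge the constants `C c` inside `MvPolynomial`, so compare values at a point.
  refine MvPolynomial.funext fun v => ?_
  simp only [bilinearBQ, F3tildePoly, F3poly, P2poly, Q2poly, map_add, map_sub, map_zero,
    Derivation.leibniz, Derivation.leibniz_pow, Derivation.map_natCast,
    Derivation.map_one_eq_zero, pderiv_C, pderiv_X_self, pderiv_zero_X_one, pderiv_one_X_zero,
    smul_zero, smul_eq_mul, nsmul_eq_mul, zero_add, add_zero, mul_zero, mul_one,
    Nat.add_one_sub_one, pow_one]
  simp only [map_add, map_sub, map_zero, map_one, map_mul, map_pow, map_natCast, map_ofNat,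
    eval_X, eval_C]
  ring

theorem bilinear_F3_tilde (α β : ℝ) :
    IsBilinearBQSolution
      (fun x t => F3 x t + 2 * α * t * P2 x t + 2 * β * x * Q2 x t
        + (α ^ 2 + β ^ 2) * (x ^ 2 + t ^ 2 + 1)) := by
  rw [← eval_F3tildePoly]
  exact isBilinearBQSolution_eval (bilinearBQ_F3tildePoly α β)
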